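/- Let n > 0 and 0 < y̲ < ȳ < 1. Then the likelihood ratio L(l) = p(l | ȳ, n, m, s, N) / p(l | y̲, n, m, s, N) is strictly increasing in l on {0,…,m}; that is, the Beta-Binomial distribution with prior mean ȳ dominates the one with prior mean y̲ in the monotone likelihood ratio order. -/
import Mathlib
set_option maxHeartbeats 1000000


/-- The Euler Beta function `B(a,b) = Γ(a)Γ(b)/Γ(a+b)`. -/
noncomputable def eulerBeta (a b : ℝ) : ℝ := Real.Gamma a * Real.Gamma b / Real.Gamma (a + b)

/-- The Beta-Binomial probability mass function
`p(l ∣ y, n, m, s, N) = C(m,l) · B(l + ny + s, m − l + n(1−y) + N − s) / B(ny + s, n(1−y) + N − s)`. -/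
noncomputable def bbPmf (y n : ℝ) (m s N : ℕ) (l : ℕ) : ℝ :=
  (m.choose l : ℝ) *
    eulerBeta ((l : ℝ) + n * y + s) ((m : ℝ) - l + n * (1 - y) + N - s) /
    eulerBeta (n * y + s) (n * (1 - y) + N - s)

lemma eulerBeta_pos {a b : ℝ} (ha : 0 < a) (hb : 0 < b) : 0 < eulerBeta a b := by
  unfold eulerBeta
  exact div_pos (mul_pos (Real.Gamma_pos_of_pos ha) (Real.Gamma_pos_of_pos hb))
    (Real.Gamma_pos_of_pos (by linarith))

lemma eulerBeta_step {a c : ℝ} (ha : 0 < a) (hc : 0 < c) :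
    eulerBeta (a + 1) c * c = eulerBeta a (c + 1) * a := by
  unfold eulerBeta
  rw [Real.Gamma_add_one (ne_of_gt ha), Real.Gamma_add_one (ne_of_gt hc),
    show a + 1 + c = a + (c + 1) by ring]
  ring

lemma bbPmf_pos {y n : ℝ} {m s N l : ℕ} (hn : 0 < n) (hy0 : 0 < y) (hy1 : y < 1)
    (hl : l ≤ m) (hsN : s ≤ N) : 0 < bbPmf y n m s N l := by
  have hny : 0 < n * y := mul_pos hn hy0
  have hny' : 0 < n * (1 - y) := mul_pos hn (by linarith)
  have hlm : (l : ℝ) ≤ m := by exact_mod_cast hl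
  have hsN' : (s : ℝ) ≤ N := by exact_mod_cast hsN
  have hl0 : (0:ℝ) ≤ l := Nat.cast_nonneg l
  have hs0 : (0:ℝ) ≤ s := Nat.cast_nonneg s
  have hchoose : (0:ℝ) < m.choose l := by exact_mod_cast Nat.choose_pos hl
  unfold bbPmf
  have h1 : 0 < eulerBeta ((l : ℝ) + n * y + s) ((m : ℝ) - l + n * (1 - y) + N - s) :=
    eulerBeta_pos (by linarith) (by linarith)
  have h2 : 0 < eulerBeta (n * y + s) (n * (1 - y) + N - s) :=
    eulerBeta_pos (by linarith) (by linarith)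
  positivity

lemma bbPmf_succ_mul {y n : ℝ} {m s N l : ℕ} (hn : 0 < n) (hy0 : 0 < y) (hy1 : y < 1)
    (hl : l < m) (hsN : s ≤ N) :
    bbPmf y n m s N (l + 1) * ((m.choose l : ℝ) * ((m : ℝ) - (l + 1) + n * (1 - y) + N - s)) =
      bbPmf y n m s N l * ((m.choose (l + 1) : ℝ) * ((l : ℝ) + n * y + s)) := by
  have hny : 0 < n * y := mul_pos hn hy0
  have hny' : 0 < n * (1 - y) := mul_pos hn (by linarith)
  have hlm : ((l : ℝ) + 1) ≤ m := by exact_mod_cast hl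
  have hsN' : (s : ℝ) ≤ N := by exact_mod_cast hsN
  have hl0 : (0:ℝ) ≤ l := Nat.cast_nonneg l
  have hs0 : (0:ℝ) ≤ s := Nat.cast_nonneg s
  have ha : 0 < (l : ℝ) + n * y + s := by linarith
  have hc : 0 < (m : ℝ) - ((l : ℝ) + 1) + n * (1 - y) + N - s := by linarith
  have hkey := eulerBeta_step ha hc
  have hD : 0 < eulerBeta (n * y + s) (n * (1 - y) + N - s) :=
    eulerBeta_pos (by linarith) (by linarith)
  unfold bbPmf
  push_cast
  rw [show ((l : ℝ) + 1) + n * y + s = ((l : ℝ) + n * y + s) + 1 by ring,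
    show (m : ℝ) - ((l : ℝ) + 1) + n * (1 - y) + N - s
        = ((m : ℝ) - ((l : ℝ) + 1) + n * (1 - y) + N - s) by ring,
    show (m : ℝ) - (l : ℝ) + n * (1 - y) + N - s
        = ((m : ℝ) - ((l : ℝ) + 1) + n * (1 - y) + N - s) + 1 by ring]
  have hD' : eulerBeta (n * y + s) (n * (1 - y) + N - s) ≠ 0 := ne_of_gt hD
  field_simp
  linear_combination ((m.choose (l + 1) : ℝ) * (m.choose l : ℝ)) * hkey

/-- The likelihood ratio `L(l) = p(l ∣ ȳ, n, m, s, N) / p(l ∣ y̲, n, m, s, N)` is strictly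
increasing in `l` on `{0, …, m}`: the Beta-Binomial distribution with larger prior mean
dominates the one with smaller prior mean in the monotone likelihood ratio order. -/
theorem bbPmf_lr_strictMono_mean (n ylo yhi : ℝ) (m s N : ℕ)
    (hn : 0 < n) (h0 : 0 < ylo) (h1 : ylo < yhi) (h2 : yhi < 1)
    (hm : 1 ≤ m) (hsN : s ≤ N) :
    ∀ l₁ l₂ : ℕ, l₁ < l₂ → l₂ ≤ m →
      bbPmf yhi n m s N l₁ / bbPmf ylo n m s N l₁ <
        bbPmf yhi n m s N l₂ / bbPmf ylo n m s N l₂ := by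
  have hylo1 : ylo < 1 := by linarith
  have hyhi0 : 0 < yhi := by linarith
  have step : ∀ l : ℕ, l < m →
      bbPmf yhi n m s N l / bbPmf ylo n m s N l <
        bbPmf yhi n m s N (l + 1) / bbPmf ylo n m s N (l + 1) := by
    intro l hl
    have hPlo : 0 < bbPmf ylo n m s N l := bbPmf_pos hn h0 hylo1 (le_of_lt hl) hsN
    have hQlo : 0 < bbPmf ylo n m s N (l + 1) := bbPmf_pos hn h0 hylo1 hl hsN
    have hPhi : 0 < bbPmf yhi n m s N l := bbPmf_pos hn hyhi0 h2 (le_of_lt hl) hsN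
    have hQhi : 0 < bbPmf yhi n m s N (l + 1) := bbPmf_pos hn hyhi0 h2 hl hsN
    rw [div_lt_div_iff₀ hPlo hQlo]
    have Hhi := bbPmf_succ_mul (y := yhi) hn hyhi0 h2 hl hsN
    have Hlo := bbPmf_succ_mul (y := ylo) hn h0 hylo1 hl hsN
    set K : ℝ := (m.choose l : ℝ) with hK
    set K' : ℝ := (m.choose (l + 1) : ℝ) with hK'
    have hKpos : 0 < K := by rw [hK]; exact_mod_cast Nat.choose_pos (le_of_lt hl)
    have hK'pos : 0 < K' := by rw [hK']; exact_mod_cast Nat.choose_pos hl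
    have hlm : ((l : ℝ) + 1) ≤ m := by exact_mod_cast hl
    have hsN' : (s : ℝ) ≤ N := by exact_mod_cast hsN
    have hl0 : (0:ℝ) ≤ l := Nat.cast_nonneg l
    have hs0 : (0:ℝ) ≤ s := Nat.cast_nonneg s
    set ahi : ℝ := (l : ℝ) + n * yhi + s with hahi
    set alo : ℝ := (l : ℝ) + n * ylo + s with halo
    set chi : ℝ := (m : ℝ) - ((l : ℝ) + 1) + n * (1 - yhi) + N - s with hchi
    set clo : ℝ := (m : ℝ) - ((l : ℝ) + 1) + n * (1 - ylo) + N - s with hclo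
    have hnyhi : 0 < n * yhi := mul_pos hn hyhi0
    have hnylo : 0 < n * ylo := mul_pos hn h0
    have hnchi : 0 < n * (1 - yhi) := mul_pos hn (by linarith)
    have hnclo : 0 < n * (1 - ylo) := mul_pos hn (by linarith)
    have halo_pos : 0 < alo := by rw [halo]; linarith
    have hahi_pos : 0 < ahi := by rw [hahi]; linarith
    have hchi_pos : 0 < chi := by rw [hchi]; linarith
    have hclo_pos : 0 < clo := by rw [hclo]; linarith
    have ha_lt : alo < ahi := by
      rw [halo, hahi]
      have : n * ylo < n * yhi := by nlinarith
      linarith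
    have hc_lt : chi < clo := by
      rw [hchi, hclo]
      have : n * (1 - yhi) < n * (1 - ylo) := by nlinarith
      linarith
    -- Hhi : Q_hi * (K * chi) = P_hi * (K' * ahi), similarly Hlo
    have hmain : alo * chi < ahi * clo :=
      calc alo * chi < ahi * chi := mul_lt_mul_of_pos_right ha_lt hchi_pos
        _ < ahi * clo := mul_lt_mul_of_pos_left hc_lt hahi_pos
    have hFE : K * chi * (K' * alo) < K' * ahi * (K * clo) := by
      have h := mul_lt_mul_of_pos_left hmain (mul_pos hKpos hK'pos)
      rw [show K * chi * (K' * alo) = K * K' * (alo * chi) from by ring,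
        show K' * ahi * (K * clo) = K * K' * (ahi * clo) from by ring]
      exact h
    have hE : 0 < K' * ahi * (K * clo) := mul_pos (mul_pos hK'pos hahi_pos) (mul_pos hKpos hclo_pos)
    have key : bbPmf yhi n m s N l * bbPmf ylo n m s N (l + 1) * (K' * ahi * (K * clo)) =
        bbPmf yhi n m s N (l + 1) * bbPmf ylo n m s N l * (K * chi * (K' * alo)) := by
      linear_combination (bbPmf yhi n m s N (l + 1) * (K * chi)) * Hlo -
        (bbPmf ylo n m s N (l + 1) * (K * clo)) * Hhi
    have hlt : bbPmf yhi n m s N l * bbPmf ylo n m s N (l + 1) * (K' * ahi * (K * clo)) <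
        bbPmf yhi n m s N (l + 1) * bbPmf ylo n m s N l * (K' * ahi * (K * clo)) := by
      rw [key]
      exact mul_lt_mul_of_pos_left hFE (mul_pos hQhi hPlo)
    exact lt_of_mul_lt_mul_right hlt (le_of_lt hE)
  intro l₁ l₂ h hle
  induction l₂ with
  | zero => omega
  | succ k ih =>
    have hk : k < m := by omega
    have hstep := step k hk
    rcases Nat.lt_succ_iff_lt_or_eq.mp h with h' | h'
    · exact lt_trans (ih h' (by omega)) hstep
    · subst h'; exact hstep
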